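/- arXiv:1712.01762 — 2 statements merged into one kernel-verified Lean document; each statement's English description precedes it below -/
import Mathlib

section
/- For 0 < α < 1, a < t, and differentiable f with f' ∈ L¹(a,b), the ABC fractional derivative satisfies ^{ABC}D^α_{a+} f(t) = (B(α)/(1-α)) Σ_{n=0}^∞ (-α/(1-α))^n ^{RL}I^{αn+1}_{a+} f'(t), the series converging locally uniformly in t. -/
open Real MeasureTheory Filter

/-- Mittag-Leffler function `E_α(z) = Σ z^n / Γ(αn+1)`. -/
noncomputable def mittagLeffler (α z : ℝ) : ℝ :=
  ∑' n : ℕ, z ^ n / Real.Gamma (α * n + 1)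

/-- Riemann–Liouville fractional integral of order `β ≥ 0` with base point `a`
(the identity for `β = 0`). -/
noncomputable def RL (a β : ℝ) (f : ℝ → ℝ) (t : ℝ) : ℝ :=
  if β = 0 then f t
  else (1 / Real.Gamma β) * ∫ τ in a..t, (t - τ) ^ (β - 1) * f τ

/-- ABR (Atangana–Baleanu, Riemann–Liouville type) fractional derivative,
with normalisation value `B = B(α)`. -/
noncomputable def ABR (B a α : ℝ) (f : ℝ → ℝ) (t : ℝ) : ℝ :=
  (B / (1 - α)) *
    deriv (fun s => ∫ x in a..s, f x * mittagLeffler α (-α / (1 - α) * (s - x) ^ α)) t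

/-- ABC (Atangana–Baleanu, Caputo type) fractional derivative. -/
noncomputable def ABC (B a α : ℝ) (f : ℝ → ℝ) (t : ℝ) : ℝ :=
  (B / (1 - α)) *
    ∫ x in a..t, deriv f x * mittagLeffler α (-α / (1 - α) * (t - x) ^ α)

/-- AB fractional integral. -/
noncomputable def ABI (B a α : ℝ) (f : ℝ → ℝ) (t : ℝ) : ℝ :=
  ((1 - α) / B) * f t + (α / B) * RL a α f t

/-- Key log-convexity consequence: `Γ(x+1) ≤ Γ(x+α) (x+α)^(1-α)`. -/
lemma gamma_aux {α x : ℝ} (hα0 : 0 < α) (hα1 : α < 1) (hx : 0 < x) :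
    Real.Gamma (x + 1) ≤ Real.Gamma (x + α) * (x + α) ^ (1 - α) := by
  have h1 : (0:ℝ) < x + α := by linarith
  have h2 : (0:ℝ) < x + α + 1 := by linarith
  have hG : 0 < Real.Gamma (x + α) := Real.Gamma_pos_of_pos h1
  have h := Real.Gamma_mul_add_mul_le_rpow_Gamma_mul_rpow_Gamma
    (s := x + α) (t := x + α + 1) (a := α) (b := 1 - α) h1 h2 hα0 (by linarith) (by ring)
  have e : α * (x + α) + (1 - α) * (x + α + 1) = x + 1 := by ring
  rw [e] at h
  have e2 : Real.Gamma (x + α + 1) = (x + α) * Real.Gamma (x + α) :=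
    Real.Gamma_add_one (ne_of_gt h1)
  rw [e2, Real.mul_rpow h1.le hG.le] at h
  calc Real.Gamma (x + 1)
      ≤ Real.Gamma (x + α) ^ α * ((x + α) ^ (1 - α) * Real.Gamma (x + α) ^ (1 - α)) := h
    _ = Real.Gamma (x + α) ^ (α + (1 - α)) * (x + α) ^ (1 - α) := by
        rw [Real.rpow_add hG]; ring
    _ = Real.Gamma (x + α) * (x + α) ^ (1 - α) := by norm_num

lemma summable_ml {α : ℝ} (hα0 : 0 < α) (hα1 : α < 1) {r : ℝ} (hr : 0 ≤ r) :
    Summable (fun n : ℕ => r ^ n / Real.Gamma (α * n + 1)) := by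
  have hG : ∀ n : ℕ, 0 < Real.Gamma (α * n + 1) := fun n =>
    Real.Gamma_pos_of_pos (by positivity)
  have main : ∀ s : ℝ, 0 < s → Summable (fun n : ℕ => s ^ n / Real.Gamma (α * n + 1)) := by
    intro s hs
    set f : ℕ → ℝ := fun n => s ^ n / Real.Gamma (α * n + 1) with hf
    have hfpos : ∀ n, 0 < f n := fun n => div_pos (pow_pos hs n) (hG n)
    refine summable_of_ratio_test_tendsto_lt_one (l := 0) one_pos
      (Eventually.of_forall fun n => (hfpos n).ne') ?_
    have hratio : ∀ n : ℕ, ‖f (n+1)‖ / ‖f n‖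
        = s * (Real.Gamma (α * n + 1) / Real.Gamma ((α * n + 1) + α)) := by
      intro n
      have e : α * ((n:ℕ)+1:ℕ) + 1 = (α * n + 1) + α := by push_cast; ring
      rw [Real.norm_eq_abs, Real.norm_eq_abs, abs_of_pos (hfpos _), abs_of_pos (hfpos _),
        hf]
      simp only [e]
      have h1 := (hG n).ne'
      have h2 : Real.Gamma ((α * n + 1) + α) ≠ 0 :=
        (Real.Gamma_pos_of_pos (by positivity)).ne'
      field_simp
      ring
    have hbound : ∀ n : ℕ, ‖f (n+1)‖ / ‖f n‖ ≤ s * (2 ^ (1-α) * (α * n + 1) ^ (-α)) := by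
      intro n
      rw [hratio n]
      set y : ℝ := α * n + 1 with hy
      have hn0 : (0:ℝ) ≤ α * n := by positivity
      have hy1 : (1:ℝ) ≤ y := by simp only [hy]; linarith
      have hy0 : (0:ℝ) < y := by linarith
      have hyα : (0:ℝ) < y + α := by linarith
      have hGy : 0 < Real.Gamma (y + α) := Real.Gamma_pos_of_pos hyα
      have key : Real.Gamma y / Real.Gamma (y + α) ≤ (y + α) ^ (1-α) / y := by
        rw [div_le_div_iff₀ hGy hy0]
        have := gamma_aux hα0 hα1 hy0
        rw [Real.Gamma_add_one hy0.ne'] at this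
        linarith [this]
      have step2 : (y + α) ^ (1-α) / y ≤ 2 ^ (1-α) * y ^ (-α) := by
        have h1 : (y + α) ^ (1-α) ≤ (2*y) ^ (1-α) :=
          Real.rpow_le_rpow hyα.le (by linarith) (by linarith)
        have h2 : (2*y) ^ (1-α) = 2 ^ (1-α) * y ^ (1-α) :=
          Real.mul_rpow (by norm_num) hy0.le
        have h3 : y ^ (1-α) / y = y ^ (-α) := by
          rw [div_eq_iff hy0.ne', ← Real.rpow_add_one hy0.ne', show -α + 1 = 1 - α by ring]
        calc (y + α) ^ (1-α) / y ≤ (2*y) ^ (1-α) / y := by gcongr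
          _ = 2 ^ (1-α) * (y ^ (1-α) / y) := by rw [h2]; ring
          _ = 2 ^ (1-α) * y ^ (-α) := by rw [h3]
      calc s * (Real.Gamma y / Real.Gamma (y + α)) ≤ s * ((y + α) ^ (1-α) / y) := by
            apply mul_le_mul_of_nonneg_left key hs.le
        _ ≤ s * (2 ^ (1-α) * y ^ (-α)) := mul_le_mul_of_nonneg_left step2 hs.le
    have hlim : Tendsto (fun n : ℕ => s * (2 ^ (1-α) * (α * n + 1) ^ (-α))) atTop (nhds 0) := by
      have h1 : Tendsto (fun n : ℕ => α * n + 1) atTop atTop := by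
        apply tendsto_atTop_add_const_right
        exact (tendsto_natCast_atTop_atTop (R := ℝ)).const_mul_atTop hα0
      have h2 : Tendsto (fun n : ℕ => (α * n + 1) ^ (-α)) atTop (nhds 0) :=
        (tendsto_rpow_neg_atTop hα0).comp h1
      have := (h2.const_mul (2 ^ (1-α))).const_mul s
      simpa using this
    exact squeeze_zero (fun n => div_nonneg (norm_nonneg _) (norm_nonneg _)) hbound hlim
  refine Summable.of_nonneg_of_le (fun n => by positivity)
    (fun n => ?_) (main (r+1) (by linarith))
  gcongr
  linarith

lemma integrable_aux {a b t β : ℝ} {g : ℝ → ℝ} (hg : IntegrableOn g (Set.Ioo a b))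
    (htb : t < b) (hβ : 0 ≤ β) :
    IntegrableOn (fun τ => (t - τ) ^ β * g τ) (Set.Ioc a t) := by
  have hsub : Set.Ioc a t ⊆ Set.Ioo a b := fun τ hτ => ⟨hτ.1, lt_of_le_of_lt hτ.2 htb⟩
  have hg' : IntegrableOn g (Set.Ioc a t) := hg.mono_set hsub
  refine Integrable.bdd_mul (c := (b - a) ^ β) hg' ?_ ?_
  · exact ((Real.continuous_rpow_const hβ).comp
      (continuous_const.sub continuous_id)).aestronglyMeasurable
  · filter_upwards [ae_restrict_mem measurableSet_Ioc] with τ hτ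
    rw [Real.norm_eq_abs, abs_of_nonneg (Real.rpow_nonneg (by linarith [hτ.2]) β)]
    exact Real.rpow_le_rpow (by linarith [hτ.2]) (by linarith [hτ.1, hτ.2]) hβ

lemma norm_int_bound {α a b t : ℝ} {g : ℝ → ℝ} (hα0 : 0 < α) (hg : IntegrableOn g (Set.Ioo a b))
    (hta : a ≤ t) (htb : t < b) (hab : a < b) (n : ℕ) :
    ∫ x in Set.Ioc a t, ‖(t - x) ^ (α * (n:ℝ)) * g x‖
      ≤ ((b - a) ^ α) ^ n * ∫ x in Set.Ioo a b, ‖g x‖ := by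
  have hsub : Set.Ioc a t ⊆ Set.Ioo a b := fun τ hτ => ⟨hτ.1, lt_of_le_of_lt hτ.2 htb⟩
  have hβ : (0:ℝ) ≤ α * n := by positivity
  have hInt := integrable_aux hg htb hβ
  have step1 : ∫ x in Set.Ioc a t, ‖(t - x) ^ (α * (n:ℝ)) * g x‖
      ≤ ∫ x in Set.Ioc a t, ((b - a) ^ α) ^ n * ‖g x‖ := by
    refine setIntegral_mono_on hInt.norm (((hg.mono_set hsub).norm).const_mul _)
      measurableSet_Ioc ?_
    intro x hx
    rw [norm_mul, Real.norm_eq_abs ((t - x) ^ (α * (n:ℝ))),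
      abs_of_nonneg (Real.rpow_nonneg (by linarith [hx.2]) _)]
    refine mul_le_mul_of_nonneg_right ?_ (norm_nonneg _)
    calc (t - x) ^ (α * (n:ℝ)) = ((t - x) ^ α) ^ n := by
          rw [Real.rpow_mul (by linarith [hx.2]), Real.rpow_natCast]
      _ ≤ ((b - a) ^ α) ^ n := by
          refine pow_le_pow_left₀ (Real.rpow_nonneg (by linarith [hx.2]) _) ?_ n
          exact Real.rpow_le_rpow (by linarith [hx.2]) (by linarith [hx.1]) hα0.le
  rw [integral_const_mul] at step1
  refine step1.trans ?_
  refine mul_le_mul_of_nonneg_left ?_ (pow_nonneg (Real.rpow_nonneg (by linarith) _) n)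
  exact setIntegral_mono_set hg.norm (Eventually.of_forall fun x => norm_nonneg _)
    (HasSubset.Subset.eventuallyLE hsub)

lemma key_eq {α a b : ℝ} (g : ℝ → ℝ) (hα0 : 0 < α) (hα1 : α < 1)
    (hg : IntegrableOn g (Set.Ioo a b)) {t : ℝ} (hta : a < t) (htb : t < b) :
    ∫ x in a..t, g x * mittagLeffler α (-α / (1 - α) * (t - x) ^ α)
      = ∑' n : ℕ, (-α / (1 - α)) ^ n * RL a (α * n + 1) g t := by
  have hab : a < b := hta.trans htb
  have hG : ∀ n : ℕ, 0 < Real.Gamma (α * n + 1) := fun n =>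
    Real.Gamma_pos_of_pos (by positivity)
  set L : ℝ := -α / (1 - α) with hL
  set F : ℕ → ℝ → ℝ := fun n x =>
    L ^ n / Real.Gamma (α * n + 1) * ((t - x) ^ (α * (n:ℝ)) * g x) with hF
  have hFint : ∀ n : ℕ, Integrable (F n) (volume.restrict (Set.Ioc a t)) := fun n =>
    (integrable_aux hg htb (by positivity)).const_mul _
  have hFsum : Summable fun n : ℕ => ∫ x in Set.Ioc a t, ‖F n x‖ := by
    have hI : (0:ℝ) ≤ ∫ x in Set.Ioo a b, ‖g x‖ := integral_nonneg fun x => norm_nonneg _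
    refine Summable.of_nonneg_of_le (fun n => integral_nonneg fun x => norm_nonneg _)
      (fun n => ?_)
      ((summable_ml hα0 hα1 (r := |L| * (b - a) ^ α) (mul_nonneg (abs_nonneg _) (Real.rpow_nonneg (by linarith) _))).mul_right
        (∫ x in Set.Ioo a b, ‖g x‖))
    have hc : ∀ x : ℝ, ‖F n x‖
        = |L| ^ n / Real.Gamma (α * n + 1) * ‖(t - x) ^ (α * (n:ℝ)) * g x‖ := by
      intro x
      simp only [hF, norm_mul, Real.norm_eq_abs, abs_div, abs_pow, abs_of_pos (hG n)]
    calc ∫ x in Set.Ioc a t, ‖F n x‖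
        = |L| ^ n / Real.Gamma (α * n + 1)
            * ∫ x in Set.Ioc a t, ‖(t - x) ^ (α * (n:ℝ)) * g x‖ := by
          simp_rw [hc]; rw [integral_const_mul]
      _ ≤ |L| ^ n / Real.Gamma (α * n + 1)
            * (((b - a) ^ α) ^ n * ∫ x in Set.Ioo a b, ‖g x‖) := by
          exact mul_le_mul_of_nonneg_left
            (norm_int_bound hα0 hg hta.le htb hab n) (by positivity)
      _ = (|L| * (b - a) ^ α) ^ n / Real.Gamma (α * n + 1)
            * ∫ x in Set.Ioo a b, ‖g x‖ := by rw [mul_pow]; ring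
  have heq : Set.EqOn (fun x => g x * mittagLeffler α (L * (t - x) ^ α))
      (fun x => ∑' n : ℕ, F n x) (Set.Ioc a t) := by
    intro x hx
    have hx0 : (0:ℝ) ≤ t - x := sub_nonneg.2 hx.2
    simp only [mittagLeffler]
    rw [← tsum_mul_left]
    refine tsum_congr fun n => ?_
    simp only [hF]
    rw [mul_pow, ← Real.rpow_natCast ((t - x) ^ α) n, ← Real.rpow_mul hx0]
    ring
  rw [intervalIntegral.integral_of_le hta.le,
    setIntegral_congr_fun measurableSet_Ioc heq,
    ← integral_tsum_of_summable_integral_norm hFint hFsum]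
  refine tsum_congr fun n => ?_
  have hRL : RL a (α * n + 1) g t = 1 / Real.Gamma (α * n + 1)
      * ∫ x in Set.Ioc a t, (t - x) ^ (α * (n:ℝ)) * g x := by
    rw [RL, if_neg ((by positivity : (0:ℝ) < α * n + 1)).ne',
      intervalIntegral.integral_of_le hta.le]
    simp only [add_sub_cancel_right]
  simp only [hF]
  rw [integral_const_mul, hRL]
  ring

/-- series formula for the ABC derivative, with locally uniform
convergence in `t` on `(a,b)`. -/
theorem ABC_series_formula (α a b B : ℝ) (f : ℝ → ℝ)
    (hα0 : 0 < α) (hα1 : α < 1) (hB : 0 < B) (hab : a < b)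
    (hdiff : ∀ x ∈ Set.Icc a b, DifferentiableAt ℝ f x)
    (hf' : IntegrableOn (deriv f) (Set.Ioo a b)) :
    (∀ t ∈ Set.Ioo a b,
      ABC B a α f t
        = (B / (1 - α)) * ∑' n : ℕ, (-α / (1 - α)) ^ n * RL a (α * n + 1) (deriv f) t) ∧
    TendstoLocallyUniformlyOn
      (fun N t => (B / (1 - α)) * ∑ n ∈ Finset.range N,
        (-α / (1 - α)) ^ n * RL a (α * n + 1) (deriv f) t)
      (fun t => ABC B a α f t) atTop (Set.Ioo a b) := by
  have hG : ∀ n : ℕ, 0 < Real.Gamma (α * n + 1) := fun n =>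
    Real.Gamma_pos_of_pos (by positivity)
  have hpt : ∀ t ∈ Set.Ioo a b, ABC B a α f t
      = (B / (1 - α)) * ∑' n : ℕ, (-α / (1 - α)) ^ n * RL a (α * n + 1) (deriv f) t := by
    intro t ht
    rw [ABC, key_eq (deriv f) hα0 hα1 hf' ht.1 ht.2]
  refine ⟨hpt, ?_⟩
  have hI0 : (0:ℝ) ≤ ∫ x in Set.Ioo a b, ‖deriv f x‖ := integral_nonneg fun x => norm_nonneg _
  set I : ℝ := ∫ x in Set.Ioo a b, ‖deriv f x‖ with hIdef
  set u : ℕ → ℝ := fun n => ‖B / (1 - α)‖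
      * ((|(-α / (1 - α))| * (b - a) ^ α) ^ n / Real.Gamma (α * n + 1) * I) with hu
  have hus : Summable u :=
    (((summable_ml hα0 hα1 (mul_nonneg (abs_nonneg _)
      (Real.rpow_nonneg (by linarith) _))).mul_right I).mul_left _)
  have hbd : ∀ (n : ℕ) (t : ℝ), t ∈ Set.Ioo a b →
      ‖B / (1 - α) * ((-α / (1 - α)) ^ n * RL a (α * n + 1) (deriv f) t)‖ ≤ u n := by
    intro n t ht
    rw [norm_mul, norm_mul, hu]
    refine mul_le_mul_of_nonneg_left ?_ (norm_nonneg _)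
    have hRLb : ‖RL a (α * n + 1) (deriv f) t‖
        ≤ ((b - a) ^ α) ^ n / Real.Gamma (α * n + 1) * I := by
      rw [RL, if_neg ((by positivity : (0:ℝ) < α * n + 1)).ne',
        intervalIntegral.integral_of_le ht.1.le]
      simp only [add_sub_cancel_right]
      rw [norm_mul, Real.norm_eq_abs (1 / _), abs_of_pos (by positivity : (0:ℝ) < 1 / _)]
      calc 1 / Real.Gamma (α * n + 1)
            * ‖∫ x in Set.Ioc a t, (t - x) ^ (α * (n:ℝ)) * deriv f x‖
          ≤ 1 / Real.Gamma (α * n + 1) * (((b - a) ^ α) ^ n * I) := by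
            refine mul_le_mul_of_nonneg_left ?_ (by positivity)
            exact (norm_integral_le_integral_norm _).trans
              (norm_int_bound hα0 hf' ht.1.le ht.2 hab n)
        _ = ((b - a) ^ α) ^ n / Real.Gamma (α * n + 1) * I := by ring
    calc ‖(-α / (1 - α)) ^ n‖ * ‖RL a (α * n + 1) (deriv f) t‖
        ≤ |(-α / (1 - α))| ^ n * (((b - a) ^ α) ^ n / Real.Gamma (α * n + 1) * I) := by
          rw [Real.norm_eq_abs, abs_pow]
          exact mul_le_mul_of_nonneg_left hRLb (pow_nonneg (abs_nonneg _) n)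
      _ = (|(-α / (1 - α))| * (b - a) ^ α) ^ n / Real.Gamma (α * n + 1) * I := by
          rw [mul_pow]; ring
  have hTU := tendstoUniformlyOn_tsum_nat hus hbd
  apply TendstoUniformlyOn.tendstoLocallyUniformlyOn
  refine (hTU.congr ?_).congr_right ?_
  · filter_upwards with N t ht
    exact (Finset.mul_sum _ _ _).symm
  · intro t ht
    show (∑' n : ℕ, B / (1 - α) * ((-α / (1 - α)) ^ n * RL a (α * ↑n + 1) (deriv f) t))
      = ABC B a α f t
    rw [tsum_mul_left, ← hpt t ht]
end

section
/- Newton–Leibniz formula for the AB model: for 0 < α < 1 and differentiable f on [a,b] with f' ∈ L¹(a,b), one has ^{AB}I^α_{a+}(^{ABC}D^α_{a+} f)(t) = f(t) - f(a). -/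
open Real MeasureTheory Filter

/-!
Write `K u = E_α (-α / (1 - α) * u ^ α)`, so that `ABC f` is `B / (1 - α)` times the finite
convolution `f' ⋆ K`. The Riemann–Liouville integral commutes with such convolutions (Fubini on
the triangle `a < x ≤ τ ≤ t`), and integrating the Mittag-Leffler series term by term against
the Beta integral gives `I^α K = (1 - α) / α * (1 - K)`. Hence
`ABI (ABC f) = f' ⋆ K + f' ⋆ (1 - K) = ∫_a^t f'`, and the fundamental theorem of calculus
finishes the proof.
-/

open Set

theorem rpow_sub_one_mul_exp_neg_le_Gamma {x R : ℝ} (hx : 1 ≤ x) (hR : 0 ≤ R) :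
    R ^ (x - 1) * exp (-R) ≤ Gamma x := by
  have hconv : IntegrableOn (fun t => exp (-t) * t ^ (x - 1)) (Ioi 0) :=
    GammaIntegral_convergent (by linarith)
  have hsub : Ioi R ⊆ Ioi 0 := Ioi_subset_Ioi hR
  have hexp : Integrable (fun t => R ^ (x - 1) * exp (-t)) (volume.restrict (Ioi R)) := by
    simpa using (exp_neg_integrableOn_Ioi R one_pos).const_mul (R ^ (x - 1))
  rw [Gamma_eq_integral (by linarith), ← integral_exp_neg_Ioi R, ← integral_const_mul]
  calc ∫ t in Ioi R, R ^ (x - 1) * exp (-t)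
      ≤ ∫ t in Ioi R, exp (-t) * t ^ (x - 1) := by
        refine setIntegral_mono_on hexp (hconv.mono_set hsub) measurableSet_Ioi fun t ht => ?_
        rw [mul_comm]
        gcongr
        exact le_of_lt ht
    _ ≤ ∫ t in Ioi 0, exp (-t) * t ^ (x - 1) :=
        setIntegral_mono_set hconv
          ((ae_restrict_mem measurableSet_Ioi).mono fun t (ht : 0 < t) => by positivity)
          hsub.eventuallyLE

theorem summable_pow_div_Gamma {α β r : ℝ} (hα : 0 < α) (hβ : 1 ≤ β) (hr : 0 ≤ r) :
    Summable fun n : ℕ => r ^ n / Gamma (α * n + β) := by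
  -- With `R ^ α = 2 r + 1`, `R ^ (x - 1) * exp (-R) ≤ Γ x` makes the terms `O(2⁻ⁿ)`
  set R := (2 * r + 1) ^ (1 / α)
  have hR : 1 ≤ R := one_le_rpow (by linarith) (by positivity)
  have hq : r / (2 * r + 1) < 1 := (div_lt_one (by linarith)).2 (by linarith)
  refine Summable.of_nonneg_of_le (fun n => div_nonneg (by positivity)
    (Gamma_pos_of_pos (by positivity)).le) (fun n => ?_)
    ((summable_geometric_of_lt_one (by positivity) hq).mul_left (exp R))
  have hRpow : (2 * r + 1) ^ n ≤ R ^ (α * n + β - 1) := by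
    calc ((2 * r + 1) ^ n : ℝ) = R ^ (α * n) := by
          rw [← rpow_mul (by linarith), one_div, inv_mul_cancel_left₀ hα.ne', rpow_natCast]
      _ ≤ R ^ (α * n + β - 1) := rpow_le_rpow_of_exponent_le hR (by linarith)
  have hΓ : (2 * r + 1) ^ n * exp (-R) ≤ Gamma (α * n + β) :=
    (mul_le_mul_of_nonneg_right hRpow (exp_pos _).le).trans
      (rpow_sub_one_mul_exp_neg_le_Gamma (le_add_of_nonneg_of_le (by positivity) hβ)
        (by linarith))
  calc r ^ n / Gamma (α * n + β) ≤ r ^ n / ((2 * r + 1) ^ n * exp (-R)) := by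
        gcongr
    _ = exp R * (r / (2 * r + 1)) ^ n := by
        rw [exp_neg, div_pow]; field_simp

theorem mittagLeffler_zero (α : ℝ) : mittagLeffler α 0 = 1 := by
  rw [mittagLeffler, tsum_eq_single 0 fun n hn => by simp [zero_pow hn]]
  simp

theorem continuous_mittagLeffler {α : ℝ} (hα : 0 < α) : Continuous (mittagLeffler α) := by
  refine continuous_iff_continuousAt.2 fun z => ?_
  have hR : 0 ≤ |z| + 1 := by positivity
  have hcont : ContinuousOn (mittagLeffler α) (Icc (-(|z| + 1)) (|z| + 1)) := by
    refine continuousOn_tsum (fun n => (continuous_pow n).div_const _ |>.continuousOn)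
      (summable_pow_div_Gamma hα le_rfl hR) fun n x hx => ?_
    rw [norm_div, norm_pow, Real.norm_of_nonneg (Gamma_pos_of_pos (by positivity)).le]
    gcongr
    exact abs_le.2 hx
  exact hcont.continuousAt (Icc_mem_nhds (by linarith [neg_abs_le z]) (by linarith [le_abs_self z]))

theorem integral_rpow_mul_sub_rpow {p q u : ℝ} (hp : 0 < p) (hq : 0 < q) (hu : 0 < u) :
    ∫ s in 0..u, s ^ (p - 1) * (u - s) ^ (q - 1)
      = u ^ (p + q - 1) * (Gamma p * Gamma q / Gamma (p + q)) := by
  have h := Complex.betaIntegral_scaled p q hu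
  rw [Complex.betaIntegral_eq_Gamma_mul_div _ _ (by simpa) (by simpa)] at h
  apply Complex.ofReal_injective
  rw [← intervalIntegral.integral_ofReal]
  convert h using 1
  · refine intervalIntegral.integral_congr fun s hs => ?_
    rw [uIcc_of_le hu.le] at hs
    push_cast
    rw [Complex.ofReal_cpow hs.1, Complex.ofReal_cpow (sub_nonneg.2 hs.2)]
    push_cast
    rfl
  · rw [Complex.ofReal_mul, Complex.ofReal_cpow hu.le]
    push_cast [← Complex.Gamma_ofReal]
    rfl

theorem intervalIntegrable_sub_rpow {α : ℝ} (hα : 0 < α) (a t : ℝ) :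
    IntervalIntegrable (fun τ => (t - τ) ^ (α - 1)) volume a t := by
  simpa using (intervalIntegral.intervalIntegrable_rpow' (by linarith : -1 < α - 1)
    (a := t - a) (b := 0)).comp_sub_left t

theorem integral_mittagLeffler_term {α u : ℝ} (c : ℝ) (n : ℕ) (hα : 0 < α) (hu : 0 < u) :
    ∫ s in Ioc 0 u,
        c ^ (n + 1) / (Gamma α * Gamma (α * n + 1)) * (s ^ (α * n) * (u - s) ^ (α - 1))
      = (c * u ^ α) ^ (n + 1) / Gamma (α * (n + 1 : ℕ) + 1) := by
  have hβ := integral_rpow_mul_sub_rpow (by positivity : 0 < α * n + 1) hα hu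
  rw [add_sub_cancel_right, show α * n + 1 + α - 1 = α * n + α by ring,
    show α * n + 1 + α = α * (n + 1 : ℕ) + 1 by push_cast; ring] at hβ
  have hΓ : 0 < Gamma α := Gamma_pos_of_pos hα
  have hΓn : 0 < Gamma (α * n + 1) := Gamma_pos_of_pos (by positivity)
  rw [integral_const_mul, ← intervalIntegral.integral_of_le hu.le, hβ, mul_pow,
    ← rpow_mul_natCast hu.le, show α * n + α = α * (n + 1 : ℕ) by push_cast; ring]
  field_simp

theorem hasSum_mul_RL_mittagLeffler {α u : ℝ} (c : ℝ) (hα : 0 < α) (hu : 0 < u) :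
    HasSum (fun n : ℕ => (c * u ^ α) ^ (n + 1) / Gamma (α * (n + 1 : ℕ) + 1))
      (c * RL 0 α (fun s => mittagLeffler α (c * s ^ α)) u) := by
  have hΓ : 0 < Gamma α := Gamma_pos_of_pos hα
  set F : ℝ → ℕ → ℝ → ℝ := fun c n s =>
    c ^ (n + 1) / (Gamma α * Gamma (α * n + 1)) * (s ^ (α * n) * (u - s) ^ (α - 1))
  have hF_int : ∀ n, IntegrableOn (F c n) (Ioc 0 u) := fun n =>
    (((intervalIntegrable_sub_rpow hα 0 u).continuousOn_mul
      (continuousOn_id.rpow_const fun _ _ => Or.inr (by positivity))).const_mul _).1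
  have hF_norm : ∀ n, ∫ s in Ioc 0 u, ‖F c n s‖ = ∫ s in Ioc 0 u, F |c| n s := by
    refine fun n => setIntegral_congr_fun measurableSet_Ioc fun s hs => ?_
    have : 0 ≤ u - s := sub_nonneg.2 hs.2
    simp only [F, norm_mul, norm_div, norm_pow, Real.norm_eq_abs, abs_of_pos hΓ,
      abs_of_pos (Gamma_pos_of_pos (by positivity : 0 < α * n + 1)),
      abs_of_nonneg (rpow_nonneg hs.1.le _), abs_of_nonneg (rpow_nonneg this _)]
  have hseries : ∀ s ∈ Ioc 0 u, ∑' n, F c n s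
      = c / Gamma α * ((u - s) ^ (α - 1) * mittagLeffler α (c * s ^ α)) := by
    intro s hs
    rw [mittagLeffler, ← tsum_mul_left, ← tsum_mul_left]
    refine tsum_congr fun n => ?_
    rw [mul_pow, ← rpow_mul_natCast hs.1.le]
    simp only [F]
    field_simp
    ring
  have hsum := hasSum_integral_of_summable_integral_norm hF_int <| by
    simp only [hF_norm, F, integral_mittagLeffler_term _ _ hα hu]
    exact (summable_nat_add_iff 1).2
      (summable_pow_div_Gamma hα le_rfl (by positivity : 0 ≤ |c| * u ^ α))
  simp only [F, integral_mittagLeffler_term _ _ hα hu] at hsum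
  rw [setIntegral_congr_fun measurableSet_Ioc hseries, integral_const_mul,
    ← intervalIntegral.integral_of_le hu.le] at hsum
  rwa [RL, if_neg hα.ne', ← mul_assoc, mul_one_div]

theorem mul_RL_mittagLeffler {α u : ℝ} (c : ℝ) (hα : 0 < α) (hu : 0 ≤ u) :
    c * RL 0 α (fun s => mittagLeffler α (c * s ^ α)) u = mittagLeffler α (c * u ^ α) - 1 := by
  rcases hu.eq_or_lt with rfl | hu
  · simp [RL, hα.ne', zero_rpow hα.ne', mittagLeffler_zero]
  have hE : HasSum (fun n : ℕ => (c * u ^ α) ^ n / Gamma (α * n + 1))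
      (c * RL 0 α (fun s => mittagLeffler α (c * s ^ α)) u + 1) := by
    refine (hasSum_nat_add_iff' 1).1 ?_
    simpa using hasSum_mul_RL_mittagLeffler c hα hu
  rw [mittagLeffler, hE.tsum_eq]
  ring

theorem integral_integral_triangle_swap {a t : ℝ} {F : ℝ → ℝ → ℝ} (hat : a ≤ t)
    (hF : IntegrableOn (Function.uncurry F) (Ioc a t ×ˢ Ioc a t)) :
    ∫ τ in a..t, ∫ x in a..τ, F τ x = ∫ x in a..t, ∫ τ in x..t, F τ x := by
  set μ := volume.restrict (Ioc a t)
  set G := {p : ℝ × ℝ | p.2 ≤ p.1}.indicator (Function.uncurry F)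
  have hG : Integrable G (μ.prod μ) := by
    rw [Measure.prod_restrict, ← Measure.volume_eq_prod]
    exact hF.indicator (measurableSet_le measurable_snd measurable_fst)
  have hleft : ∀ τ ∈ Ioc a t, ∫ x in a..τ, F τ x = ∫ x, G (τ, x) ∂μ := by
    intro τ hτ
    have hGτ : (fun x => G (τ, x)) = (Iic τ).indicator (F τ) := by
      ext x; simp [G, indicator_apply]
    rw [hGτ, setIntegral_indicator measurableSet_Iic, Ioc_inter_Iic, min_eq_right hτ.2,
      intervalIntegral.integral_of_le hτ.1.le]
  have hright : ∀ x ∈ Ioc a t, ∫ τ in x..t, F τ x = ∫ τ, G (τ, x) ∂μ := by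
    intro x hx
    have hGx : (fun τ => G (τ, x)) = (Ici x).indicator (fun τ => F τ x) := by
      ext τ; simp [G, indicator_apply]
    have hset : Ioc a t ∩ Ici x = Icc x t := by
      ext τ
      simp only [mem_inter_iff, mem_Ioc, mem_Ici, mem_Icc]
      exact ⟨fun h => ⟨h.2, h.1.2⟩, fun h => ⟨⟨hx.1.trans_le h.1, h.2⟩, h.1⟩⟩
    rw [hGx, setIntegral_indicator measurableSet_Ici, hset, integral_Icc_eq_integral_Ioc,
      intervalIntegral.integral_of_le hx.2]
  rw [intervalIntegral.integral_of_le hat, intervalIntegral.integral_of_le hat,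
    setIntegral_congr_fun measurableSet_Ioc hleft, setIntegral_congr_fun measurableSet_Ioc hright]
  exact integral_integral_swap hG

theorem integrableOn_sub_rpow_mul_mul_comp_sub {α a t : ℝ} {g K : ℝ → ℝ} (hα : 0 < α)
    (hK : Continuous K) (hg : IntegrableOn g (Ioc a t)) :
    IntegrableOn (fun p : ℝ × ℝ => (t - p.1) ^ (α - 1) * (g p.2 * K (p.1 - p.2)))
      (Ioc a t ×ˢ Ioc a t) := by
  obtain ⟨M, hM⟩ := (isCompact_Icc (a := a - t) (b := t - a)).exists_bound_of_continuousOn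
    hK.continuousOn
  have hker : IntegrableOn (fun τ => (t - τ) ^ (α - 1)) (Ioc a t) :=
    (intervalIntegrable_sub_rpow hα a t).1
  rw [IntegrableOn, Measure.volume_eq_prod, ← Measure.prod_restrict]
  refine (hker.mul_prod (hg.norm.const_mul M)).mono ?_ ?_
  · exact (hker.1.comp_fst.mul (hg.1.comp_snd.mul
      (hK.comp (continuous_fst.sub continuous_snd)).aestronglyMeasurable))
  · rw [Measure.prod_restrict]
    filter_upwards [ae_restrict_mem (measurableSet_Ioc.prod measurableSet_Ioc)]
      with ⟨τ, x⟩ ⟨hτ, hx⟩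
    have hK' : ‖K (τ - x)‖ ≤ M :=
      hM _ ⟨by linarith [hτ.1, hx.2], by linarith [hτ.2, hx.1]⟩
    have hker_nonneg : 0 ≤ (t - τ) ^ (α - 1) := rpow_nonneg (by linarith [hτ.2]) _
    have hM0 : 0 ≤ M := (norm_nonneg _).trans hK'
    simp only [norm_mul, norm_norm, Real.norm_of_nonneg hker_nonneg, Real.norm_of_nonneg hM0]
    rw [mul_comm M]
    gcongr

theorem RL_convolution {α a t : ℝ} {g K : ℝ → ℝ} (hα : 0 < α) (hat : a ≤ t)
    (hK : Continuous K) (hg : IntegrableOn g (Ioc a t)) :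
    RL a α (fun τ => ∫ x in a..τ, g x * K (τ - x)) t
      = ∫ x in a..t, g x * RL 0 α K (t - x) := by
  have hswap := integral_integral_triangle_swap
    (F := fun τ x => (t - τ) ^ (α - 1) * (g x * K (τ - x))) hat
    (integrableOn_sub_rpow_mul_mul_comp_sub hα hK hg)
  have hshift : ∀ x, ∫ τ in x..t, (t - τ) ^ (α - 1) * (g x * K (τ - x))
      = g x * ∫ s in 0..t - x, (t - x - s) ^ (α - 1) * K s := by
    intro x
    have h := intervalIntegral.integral_comp_sub_right (a := x) (b := t)
      (fun s => (t - x - s) ^ (α - 1) * K s) x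
    rw [sub_self] at h
    rw [← h, ← intervalIntegral.integral_const_mul]
    refine intervalIntegral.integral_congr fun τ _ => ?_
    simp only [sub_sub_sub_cancel_right]
    ring
  simp only [RL, if_neg hα.ne']
  calc 1 / Gamma α * ∫ τ in a..t, (t - τ) ^ (α - 1) * ∫ x in a..τ, g x * K (τ - x)
      = 1 / Gamma α *
          ∫ τ in a..t, ∫ x in a..τ, (t - τ) ^ (α - 1) * (g x * K (τ - x)) := by
        simp only [intervalIntegral.integral_const_mul]
    _ = 1 / Gamma α * ∫ x in a..t, g x * ∫ s in 0..t - x, (t - x - s) ^ (α - 1) * K s := by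
        simp only [hswap, hshift]
    _ = _ := by
        rw [← intervalIntegral.integral_const_mul]
        congr 1 with x
        ring

theorem RL_const_mul (a β k : ℝ) (h : ℝ → ℝ) (t : ℝ) :
    RL a β (fun τ => k * h τ) t = k * RL a β h t := by
  unfold RL
  split_ifs
  dsimp only
  simp only [mul_left_comm _ k, intervalIntegral.integral_const_mul]

theorem RL_mittagLeffler_ABC_kernel {α u : ℝ} (hα0 : 0 < α) (hα1 : α < 1) (hu : 0 ≤ u) :
    RL 0 α (fun s => mittagLeffler α (-α / (1 - α) * s ^ α)) u
      = (1 - α) / α * (1 - mittagLeffler α (-α / (1 - α) * u ^ α)) := by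
  have h := mul_RL_mittagLeffler (-α / (1 - α)) hα0 hu
  generalize RL 0 α _ u = R at h ⊢
  have : 1 - α ≠ 0 := by linarith
  field_simp at h ⊢
  linarith

theorem ABI_ABC {α a t B : ℝ} {f : ℝ → ℝ} (hα0 : 0 < α) (hα1 : α < 1) (hB : B ≠ 0)
    (hat : a ≤ t) (hf' : IntegrableOn (deriv f) (Ioc a t)) :
    ABI B a α (ABC B a α f) t = ∫ x in a..t, deriv f x := by
  set K : ℝ → ℝ := fun u => mittagLeffler α (-α / (1 - α) * u ^ α)
  have hK : Continuous K :=
    (continuous_mittagLeffler hα0).comp (continuous_const.mul (continuous_rpow_const hα0.le))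
  have hf'_int : IntervalIntegrable (deriv f) volume a t :=
    (intervalIntegrable_iff_integrableOn_Ioc_of_le hat).2 hf'
  have hK_int : IntervalIntegrable (fun x => deriv f x * K (t - x)) volume a t :=
    hf'_int.mul_continuousOn (hK.comp (continuous_sub_left t)).continuousOn
  have h1α : 1 - α ≠ 0 := by linarith
  have hABC : ABC B a α f = fun τ => B / (1 - α) * ∫ x in a..τ, deriv f x * K (τ - x) := rfl
  have hRL : RL a α (ABC B a α f) t = B / α * ∫ x in a..t, deriv f x * (1 - K (t - x)) := by
    rw [hABC, RL_const_mul, RL_convolution hα0 hat hK hf', ← intervalIntegral.integral_const_mul,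
      ← intervalIntegral.integral_const_mul]
    refine intervalIntegral.integral_congr fun x hx => ?_
    rw [uIcc_of_le hat] at hx
    rw [RL_mittagLeffler_ABC_kernel hα0 hα1 (sub_nonneg.2 hx.2)]
    simp only [K]
    field_simp
  have hsplit : ∫ x in a..t, deriv f x
      = (∫ x in a..t, deriv f x * K (t - x)) + ∫ x in a..t, deriv f x * (1 - K (t - x)) := by
    simp only [mul_one_sub]
    rw [← intervalIntegral.integral_add hK_int (hf'_int.sub hK_int)]
    simp only [add_sub_cancel]
  rw [ABI, hRL, hABC, hsplit]
  clear_value K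
  field_simp

theorem AB_newton_leibniz_general (α a b B : ℝ) (f : ℝ → ℝ)
    (hα0 : 0 < α) (hα1 : α < 1) (hB : 0 < B)
    (hdiff : ∀ x ∈ Set.Icc a b, DifferentiableAt ℝ f x)
    (hf' : IntegrableOn (deriv f) (Set.Ioo a b)) :
    ∀ t ∈ Set.Ioo a b, ABI B a α (ABC B a α f) t = f t - f a := by
  rintro t ⟨hat, htb⟩
  have hf'_Ioc : IntegrableOn (deriv f) (Ioc a t) :=
    (integrableOn_Ioc_iff_integrableOn_Ioo).2 (hf'.mono_set (Ioo_subset_Ioo_right htb.le))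
  rw [ABI_ABC hα0 hα1 hB.ne' hat.le hf'_Ioc]
  refine intervalIntegral.integral_deriv_eq_sub (fun x hx => hdiff x ?_)
    ((intervalIntegrable_iff_integrableOn_Ioc_of_le hat.le).2 hf'_Ioc)
  rw [uIcc_of_le hat.le] at hx
  exact Icc_subset_Icc_right htb.le hx

/-- Newton–Leibniz formula in the AB model:
`^{AB}I^α(^{ABC}D^α f)(t) = f(t) - f(a)`. -/
theorem AB_newton_leibniz (α a b B : ℝ) (f : ℝ → ℝ)
    (hα0 : 0 < α) (hα1 : α < 1) (hB : 0 < B) (hab : a < b)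
    (hdiff : ∀ x ∈ Set.Icc a b, DifferentiableAt ℝ f x)
    (hf' : IntegrableOn (deriv f) (Set.Ioo a b)) :
    ∀ t ∈ Set.Ioo a b, ABI B a α (ABC B a α f) t = f t - f a :=
  AB_newton_leibniz_general α a b B f hα0 hα1 hB hdiff hf'
end
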